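/- A nonnegative real number α is an elementary real number if and only if there exists a fast elementary map g : ℕ → ℚ with lim_{x→∞} g(x) = α. -/

import Mathlib

/-- The class of elementary functions `ℕ^n → ℕ`: the smallest class containing the
zero function, successor, projections, addition, multiplication and truncated
subtraction, and closed under composition, bounded summation and bounded product. -/
inductive Elem : ∀ {n : ℕ}, ((Fin n → ℕ) → ℕ) → Prop
  | zero {n : ℕ} : Elem (fun _ : Fin n → ℕ => 0)
  | succ : Elem (fun x : Fin 1 → ℕ => x 0 + 1)
  | proj {n : ℕ} (i : Fin n) : Elem (fun x : Fin n → ℕ => x i)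
  | add : Elem (fun x : Fin 2 → ℕ => x 0 + x 1)
  | mul : Elem (fun x : Fin 2 → ℕ => x 0 * x 1)
  | tsub : Elem (fun x : Fin 2 → ℕ => x 0 - x 1)
  | comp {m n : ℕ} {f : (Fin m → ℕ) → ℕ} {g : Fin m → (Fin n → ℕ) → ℕ} :
      Elem f → (∀ i, Elem (g i)) → Elem (fun x => f (fun i => g i x))
  | bsum {n : ℕ} {f : (Fin (n + 1) → ℕ) → ℕ} : Elem f →
      Elem (fun x : Fin (n + 1) → ℕ =>
        ∑ t ∈ Finset.range (x 0 + 1), f (Fin.cons t (fun i => x i.succ)))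
  | bprod {n : ℕ} {f : (Fin (n + 1) → ℕ) → ℕ} : Elem f →
      Elem (fun x : Fin (n + 1) → ℕ =>
        ∏ t ∈ Finset.range (x 0 + 1), f (Fin.cons t (fun i => x i.succ)))

/-- A one-variable function `ℕ → ℕ` is elementary. -/
def Elem1 (f : ℕ → ℕ) : Prop :=
  Elem (fun x : Fin 1 → ℕ => f (x 0))

/-- A (nonnegative) real number is elementary if it is approximated, with an
elementary modulus, by an elementary rational Cauchy sequence. -/
def ElemReal (α : ℝ) : Prop :=
  ∃ a b c : ℕ → ℕ, Elem1 a ∧ Elem1 b ∧ Elem1 c ∧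
    ∀ k : ℕ, 1 ≤ k → ∀ x : ℕ, c k ≤ x →
      |(a x : ℝ) / ((b x : ℝ) + 1) - α| < 1 / (k : ℝ)

/-- A map `g : ℕ → ℚ` is elementary if `g(x) = a(x)/(b(x)+1)` for elementary
`a, b : ℕ → ℕ`. -/
def ElemRatSeq (g : ℕ → ℚ) : Prop :=
  ∃ a b : ℕ → ℕ, Elem1 a ∧ Elem1 b ∧ ∀ x : ℕ, g x = (a x : ℚ) / ((b x : ℚ) + 1)

/-- A map `g : ℕ → ℚ` is fast if `|g(x) − g(x+1)| < 7^{-(x+1)}` for all `x`. -/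
def FastSeq (g : ℕ → ℚ) : Prop :=
  ∀ x : ℕ, |g x - g (x + 1)| < 1 / 7 ^ (x + 1)

/-!
A modulus `c` for `α` turns the approximants `a x / (b x + 1)` into a fast sequence by
sampling them at `x ↦ c (7 ^ (x + 2))`: consecutive terms are then within
`7^{-(x+2)} + 7^{-(x+3)} < 7^{-(x+1)}` of each other. Conversely, a fast sequence is
within the geometric tail `Σ_{n ≥ x} 7^{-(n+1)} = 1 / (6 · 7^x)` of its limit, and
`1 / (6 · 7^x) < 1 / k` once `x ≥ k`, so the identity is a modulus.
-/

open Filter Topology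

namespace Elem1

theorem comp {f g : ℕ → ℕ} (hf : Elem1 f) (hg : Elem1 g) : Elem1 (fun x => f (g x)) :=
  Elem.comp (g := fun _ x => g (x 0)) hf fun _ => hg

theorem id : Elem1 (fun x => x) :=
  Elem.proj 0

theorem succ : Elem1 (fun x => x + 1) :=
  Elem.succ

theorem const (n : ℕ) : Elem1 (fun _ => n) := by
  induction n with
  | zero => exact Elem.zero
  | succ k ih => exact succ.comp ih

theorem pow_succ (m : ℕ) : Elem1 (fun x => m ^ (x + 1)) := by
  have h := Elem.bprod (n := 0) (const m)
  simpa only [Elem1, Finset.prod_const, Finset.card_range] using h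

end Elem1

theorem FastSeq.abs_sub_le_of_tendsto {g : ℕ → ℚ} {α : ℝ} (hg : FastSeq g)
    (hlim : Tendsto (fun x => (g x : ℝ)) atTop (𝓝 α)) (x : ℕ) :
    |(g x : ℝ) - α| ≤ 1 / (6 * 7 ^ x) := by
  have hstep : ∀ n, dist (g n : ℝ) (g (n + 1)) ≤ 1 / 7 * (1 / 7) ^ n := by
    intro n
    have h := hg n
    rw [← Rat.cast_lt (K := ℝ)] at h
    push_cast at h
    calc dist (g n : ℝ) (g (n + 1)) ≤ 1 / 7 ^ (n + 1) := (Real.dist_eq _ _).trans_le h.le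
      _ = 1 / 7 * (1 / 7) ^ n := by rw [_root_.pow_succ', one_div_pow]; field_simp
  have htail := dist_le_of_le_geometric_of_tendsto _ _ (by norm_num) hstep hlim x
  rw [Real.dist_eq] at htail
  convert htail using 1
  rw [one_div_pow]
  field_simp
  norm_num

theorem fastSeq_of_abs_sub_lt {g : ℕ → ℚ} {α : ℝ}
    (h : ∀ x, |(g x : ℝ) - α| < 1 / 7 ^ (x + 2)) : FastSeq g := by
  intro x
  rw [← Rat.cast_lt (K := ℝ)]
  push_cast
  have hpow : (0 : ℝ) < 7 ^ x := by positivity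
  calc |(g x : ℝ) - g (x + 1)| ≤ |(g x : ℝ) - α| + |(g (x + 1) : ℝ) - α| :=
        (abs_sub_le _ α _).trans_eq (by rw [abs_sub_comm α])
    _ < 1 / 7 ^ (x + 2) + 1 / 7 ^ (x + 1 + 2) := add_lt_add (h x) (h (x + 1))
    _ < 1 / 7 ^ (x + 1) := by
        simp only [pow_add]
        field_simp
        linarith

theorem tendsto_of_abs_sub_lt {g : ℕ → ℚ} {α : ℝ}
    (h : ∀ x, |(g x : ℝ) - α| < 1 / 7 ^ (x + 2)) : Tendsto (fun x => (g x : ℝ)) atTop (𝓝 α) := by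
  have hlim : Tendsto (fun x : ℕ => (1 : ℝ) / 7 ^ (x + 2)) atTop (𝓝 0) := by
    simp only [← one_div_pow]
    exact (tendsto_pow_atTop_nhds_zero_of_lt_one (by norm_num) (by norm_num)).comp
      (tendsto_add_atTop_nat 2)
  rw [tendsto_iff_dist_tendsto_zero]
  exact squeeze_zero (fun _ => dist_nonneg) (fun x => (h x).le) hlim

theorem elemReal_iff_fast_elemRatSeq_general (α : ℝ) :
    ElemReal α ↔ ∃ g : ℕ → ℚ, ElemRatSeq g ∧ FastSeq g ∧
      Filter.Tendsto (fun x => (g x : ℝ)) Filter.atTop (nhds α) := by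
  constructor
  · rintro ⟨a, b, c, ha, hb, hc, hmod⟩
    set M : ℕ → ℕ := fun x => c (7 ^ (x + 2))
    have hM : Elem1 M := hc.comp ((Elem1.pow_succ 7).comp Elem1.succ)
    set g : ℕ → ℚ := fun x => (a (M x) : ℚ) / ((b (M x) : ℚ) + 1)
    have happrox : ∀ x, |(g x : ℝ) - α| < 1 / 7 ^ (x + 2) := fun x => by
      simpa [g] using hmod (7 ^ (x + 2)) (Nat.one_le_pow _ _ (by norm_num)) (M x) le_rfl
    exact ⟨g, ⟨_, _, ha.comp hM, hb.comp hM, fun _ => rfl⟩,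
      fastSeq_of_abs_sub_lt happrox, tendsto_of_abs_sub_lt happrox⟩
  · rintro ⟨g, ⟨a, b, ha, hb, hab⟩, hfast, hlim⟩
    refine ⟨a, b, fun x => x, ha, hb, Elem1.id, fun k hk x hx => ?_⟩
    have hk : (0 : ℝ) < k := by exact_mod_cast hk
    have hkx : (k : ℝ) ≤ x := by exact_mod_cast hx
    have hx7 : (x : ℝ) < 7 ^ x := by exact_mod_cast Nat.lt_pow_self (by norm_num : 1 < 7)
    calc |(a x : ℝ) / ((b x : ℝ) + 1) - α| = |(g x : ℝ) - α| := by
          rw [hab x]; push_cast; rfl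
      _ ≤ 1 / (6 * 7 ^ x) := hfast.abs_sub_le_of_tendsto hlim x
      _ < 1 / k := one_div_lt_one_div_of_lt hk (by linarith)

/-- A nonnegative real number is elementary iff it is the limit
of a fast elementary rational sequence. -/
theorem elemReal_iff_fast_elemRatSeq (α : ℝ) (hα0 : 0 ≤ α) :
    ElemReal α ↔ ∃ g : ℕ → ℚ, ElemRatSeq g ∧ FastSeq g ∧
      Filter.Tendsto (fun x => (g x : ℝ)) Filter.atTop (nhds α) :=
  elemReal_iff_fast_elemRatSeq_general α
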